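/- In a delete-free STRIPS planning problem with initial state ∅, a finite set of actions A' can be ordered into an executable sequence if and only if every nonempty subset B ⊆ A' contains some action b whose preconditions are all contained in ⋃_{a ∈ A' \ B} add(a). -/

import Mathlib

/-- Delete-free successor state: `exec_a(s) = s ∪ add a`. -/
def rStep {X A : Type*} (add : A → Set X) (s : Set X) (a : A) : Set X := s ∪ add a

/-- Executability of an action sequence in delete-free STRIPS. -/
def RExecutable {X A : Type*} (pre add : A → Set X) : List A → Set X → Prop
  | [], _ => True
  | a :: l, s => pre a ⊆ s ∧ RExecutable pre add l (rStep add s a)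

/-- A finite set of actions can be ordered into a sequence executable in the
initial state `∅`. -/
def Orderable {X A : Type*} (pre add : A → Set X) (S : Finset A) : Prop :=
  ∃ l : List A, l.Nodup ∧ (∀ a, a ∈ l ↔ a ∈ S) ∧ RExecutable pre add l (∅ : Set X)

/-- In an executable list, some member of `B` has its preconditions covered by
`s` together with adds of list elements outside `B`. -/
lemma exec_first {X A : Type*} (pre add : A → Set X) (B : Set A) :
    ∀ (l : List A) (s : Set X), RExecutable pre add l s → (∃ a ∈ l, a ∈ B) →
      ∃ b ∈ B, pre b ⊆ s ∪ ⋃ a ∈ {a | a ∈ l ∧ a ∉ B}, add a := by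
  intro l
  induction l with
  | nil => rintro s _ ⟨a, ha, _⟩; simp at ha
  | cons a l ih =>
    rintro s ⟨hpre, hexec⟩ ⟨c, hc, hcB⟩
    by_cases haB : a ∈ B
    · exact ⟨a, haB, hpre.trans (Set.subset_union_left)⟩
    · have hc' : ∃ a ∈ l, a ∈ B := by
        rcases List.mem_cons.mp hc with h | h
        · exact absurd (h ▸ hcB) haB
        · exact ⟨c, h, hcB⟩
      obtain ⟨b, hbB, hb⟩ := ih (rStep add s a) hexec hc'
      refine ⟨b, hbB, hb.trans ?_⟩
      rintro x (hx | hx)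
      · rcases hx with hx | hx
        · exact Or.inl hx
        · exact Or.inr (Set.mem_biUnion ⟨List.mem_cons_self, haB⟩ hx)
      · right
        rw [Set.mem_iUnion₂] at hx ⊢
        obtain ⟨i, ⟨hil, hiB⟩, hxi⟩ := hx
        exact ⟨i, ⟨List.mem_cons_of_mem a hil, hiB⟩, hxi⟩

/-- Building an executable enumeration from the subset condition. -/
lemma build {X A : Type*} [DecidableEq A] (pre add : A → Set X) :
    ∀ (A' : Finset A) (s : Set X),
      (∀ B : Finset A, B ⊆ A' → B.Nonempty →
        ∃ b ∈ B, pre b ⊆ s ∪ ⋃ a ∈ ((A' \ B : Finset A) : Set A), add a) →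
      ∃ l : List A, l.Nodup ∧ (∀ a, a ∈ l ↔ a ∈ A') ∧ RExecutable pre add l s := by
  intro A'
  induction A' using Finset.strongInduction with
  | _ A' ih =>
    intro s h
    rcases A'.eq_empty_or_nonempty with rfl | hne
    · exact ⟨[], List.nodup_nil, by simp, trivial⟩
    · obtain ⟨b, hbA, hb⟩ := h A' (subset_refl _) hne
      have hbs : pre b ⊆ s := by simpa using hb
      have hside : ∀ B : Finset A, B ⊆ A' \ {b} → B.Nonempty →
          ∃ b' ∈ B, pre b' ⊆ (s ∪ add b) ∪
            ⋃ a ∈ (((A' \ {b}) \ B : Finset A) : Set A), add a := by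
        intro B hB hBne
        obtain ⟨b', hb'B, hb'⟩ := h B (hB.trans (Finset.sdiff_subset)) hBne
        have hbB : b ∉ B := fun hx => by have := hB hx; simp at this
        refine ⟨b', hb'B, hb'.trans ?_⟩
        rintro x (hx | hx)
        · exact Or.inl (Or.inl hx)
        · rw [Set.mem_iUnion₂] at hx
          obtain ⟨i, hi, hxi⟩ := hx
          simp only [Finset.coe_sdiff, Set.mem_diff, Finset.mem_coe] at hi
          by_cases hib : i = b
          · exact Or.inl (Or.inr (hib ▸ hxi))
          · refine Or.inr (Set.mem_biUnion ?_ hxi)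
            simp only [Finset.coe_sdiff, Set.mem_diff, Finset.mem_coe,
              Finset.mem_sdiff, Finset.mem_singleton]
            exact ⟨⟨hi.1, hib⟩, hi.2⟩
      obtain ⟨l, hnd, hmem, hexec⟩ := ih (A' \ {b})
        (Finset.sdiff_ssubset (Finset.singleton_subset_iff.mpr hbA)
          (Finset.singleton_nonempty b)) (s ∪ add b) hside
      refine ⟨b :: l, ?_, ?_, hbs, hexec⟩
      · refine List.nodup_cons.mpr ⟨fun hbl => ?_, hnd⟩
        have := (hmem b).mp hbl
        simp at this
      · intro a
        simp only [List.mem_cons, hmem, Finset.mem_sdiff, Finset.mem_singleton]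
        constructor
        · rintro (rfl | ⟨h1, _⟩) <;> [exact hbA; exact h1]
        · intro haA
          by_cases hab : a = b
          · exact Or.inl hab
          · exact Or.inr ⟨haA, hab⟩

/-- A finite set of actions `A'` can be ordered into an executable sequence iff
every nonempty subset `B ⊆ A'` contains some action `b` whose preconditions are
all contained in `⋃_{a ∈ A' \ B} add a`. -/
theorem stmt_15 {X A : Type*} [DecidableEq A] (pre add : A → Set X)
    (A' : Finset A) :
    Orderable pre add A' ↔
      ∀ B : Finset A, B ⊆ A' → B.Nonempty →
        ∃ b ∈ B, pre b ⊆ ⋃ a ∈ ((A' \ B : Finset A) : Set A), add a := by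
  constructor
  · rintro ⟨l, hnd, hmem, hexec⟩ B hB hBne
    obtain ⟨c, hcB⟩ := hBne
    obtain ⟨b, hbB, hb⟩ := exec_first pre add (B : Set A) l ∅ hexec
      ⟨c, (hmem c).mpr (hB hcB), hcB⟩
    refine ⟨b, hbB, hb.trans ?_⟩
    rintro x (hx | hx)
    · exact absurd hx (Set.notMem_empty x)
    · rw [Set.mem_iUnion₂] at hx ⊢
      obtain ⟨i, ⟨hil, hiB⟩, hxi⟩ := hx
      exact ⟨i, by simpa using ⟨(hmem i).mp hil, hiB⟩, hxi⟩
  · intro h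
    obtain ⟨l, hnd, hmem, hexec⟩ := build pre add A' ∅ (fun B hB hBne => by
      obtain ⟨b, hbB, hb⟩ := h B hB hBne
      exact ⟨b, hbB, hb.trans Set.subset_union_right⟩)
    exact ⟨l, hnd, hmem, hexec⟩
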